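/- Chain rule for dual real differentiability: if f is dual real differentiable at a and g is dual real differentiable at f(a), then g∘f is dual real differentiable at a with D(g∘f)(a) = Dg(f(a)) ∘ Df(a). -/

import Mathlib

open DualNumber

set_option synthInstance.maxHeartbeats 400000
set_option maxHeartbeats 1000000

/-- The `(n,m)`-dimensional module `ℝ⁽²⁾ⁿ'ᵐ = (ℝ⁽²⁾)ⁿ × (ℝ·1#)ᵐ`, realized as a
submodule of `(Fin n → ℝ[ε]) × (Fin m → ℝ[ε])` where the second-block
coordinates have zero real part. -/
def Vnm (n m : ℕ) : Submodule (DualNumber ℝ) ((Fin n → DualNumber ℝ) × (Fin m → DualNumber ℝ)) where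
  carrier := {p | ∀ j, TrivSqZeroExt.fst (p.2 j) = 0}
  add_mem' := by
    intro a b ha hb j
    simp only [Prod.snd_add, Pi.add_apply, TrivSqZeroExt.fst_add, ha j, hb j, add_zero]
  zero_mem' := by intro j; simp
  smul_mem' := by
    intro c p hp j
    show TrivSqZeroExt.fst (c • p.2 j) = 0
    rw [smul_eq_mul, TrivSqZeroExt.fst_mul, hp j, mul_zero]

/-- The norm on `Vnm n m` coming from the inner product
`<x,y> = 2 sum x_i1 y_i1 + sum x_i2 y_i2 + sum x_{n+j} y_{n+j}`. -/
noncomputable def vNorm {n m : ℕ} (v : Vnm n m) : ℝ :=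
  Real.sqrt (2 * ∑ i, TrivSqZeroExt.fst (v.val.1 i) ^ 2
    + ∑ i, TrivSqZeroExt.snd (v.val.1 i) ^ 2
    + ∑ j, TrivSqZeroExt.snd (v.val.2 j) ^ 2)

/-- `f` is dual real differentiable at `a ∈ U` with `ℝ⁽²⁾`-linear derivative `L`
if `‖f x - f a - L (x - a)‖ / ‖x - a‖ → 0` as `x → a` within `U`. -/
def DRDiffAt {n m s t : ℕ} (U : Set (Vnm n m)) (f : Vnm n m → Vnm s t)
    (a : Vnm n m) (L : Vnm n m →ₗ[DualNumber ℝ] Vnm s t) : Prop :=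
  Filter.Tendsto (fun x => vNorm (f x - f a - L (x - a)) / vNorm (x - a))
    (nhdsWithin a (U \ {a})) (nhds 0)

/-!
Scaling the real parts of the first block by `√2` and forgetting the (vanishing) real parts of the
second block identifies `Vnm n m` ℝ-linearly and homeomorphically with a Euclidean space whose norm
is `vNorm`. Through this identification, dual real differentiability of `f` at `a` within `U` is
Fréchet differentiability of the transported map within the image of `U`, and the transported
derivative of a composite is the composite of the transported derivatives; so the chain rule is
`HasFDerivWithinAt.comp`.
-/

attribute [fun_prop] TrivSqZeroExt.continuous_fst TrivSqZeroExt.continuous_snd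
  TrivSqZeroExt.continuous_inl TrivSqZeroExt.continuous_inr

namespace Vnm

abbrev Euclidean (n m : ℕ) := EuclideanSpace ℝ ((Fin n ⊕ Fin n) ⊕ Fin m)

noncomputable def toEuclidean (n m : ℕ) : Vnm n m ≃L[ℝ] Euclidean n m where
  toFun v := WithLp.toLp 2 <| Sum.elim
    (Sum.elim (fun i => √2 * (v.val.1 i).fst) (fun i => (v.val.1 i).snd))
    (fun j => (v.val.2 j).snd)
  invFun w := ⟨(fun i => TrivSqZeroExt.inl ((√2)⁻¹ * w (.inl (.inl i)))
      + TrivSqZeroExt.inr (w (.inl (.inr i))),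
      fun j => TrivSqZeroExt.inr (w (.inr j))), fun j => by simp⟩
  map_add' x y := by
    ext ((i | i) | j) <;> simp [mul_add]
  map_smul' r x := by
    ext ((i | i) | j) <;> simp [smul_eq_mul]; ring
  left_inv v := by
    refine Subtype.ext (Prod.ext (funext fun i => ?_) (funext fun j => ?_)) <;> ext
    · simp
    · simp
    · simpa using (v.2 j).symm
    · simp
  right_inv w := by
    ext ((i | i) | j) <;> simp
  continuous_toFun := by
    refine (PiLp.continuous_toLp 2 _).comp (continuous_pi fun k => ?_)
    rcases k with (i | i) | j <;> dsimp <;> fun_prop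
  continuous_invFun := by
    fun_prop

theorem norm_toEuclidean {n m : ℕ} (v : Vnm n m) : ‖toEuclidean n m v‖ = vNorm v := by
  rw [EuclideanSpace.norm_eq, vNorm, Fintype.sum_sum_type, Fintype.sum_sum_type, Finset.mul_sum]
  simp [toEuclidean, mul_pow]

variable {n m s t p q : ℕ}

noncomputable def euclideanMap (f : Vnm n m → Vnm s t) : Euclidean n m → Euclidean s t :=
  toEuclidean s t ∘ f ∘ (toEuclidean n m).symm

noncomputable def euclideanCLM (L : Vnm n m →ₗ[DualNumber ℝ] Vnm s t) :
    Euclidean n m →L[ℝ] Euclidean s t :=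
  LinearMap.toContinuousLinearMap <| (toEuclidean s t).toLinearMap ∘ₗ L.restrictScalars ℝ ∘ₗ
    (toEuclidean n m).symm.toLinearMap

theorem euclideanCLM_apply (L : Vnm n m →ₗ[DualNumber ℝ] Vnm s t) (w : Euclidean n m) :
    euclideanCLM L w = toEuclidean s t (L ((toEuclidean n m).symm w)) :=
  rfl

@[simp]
theorem euclideanMap_toEuclidean (f : Vnm n m → Vnm s t) (x : Vnm n m) :
    euclideanMap f (toEuclidean n m x) = toEuclidean s t (f x) := by
  simp [euclideanMap]

theorem euclideanMap_comp (f : Vnm n m → Vnm s t) (g : Vnm s t → Vnm p q) :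
    euclideanMap (g ∘ f) = euclideanMap g ∘ euclideanMap f := by
  ext1 w
  simp [euclideanMap]

theorem euclideanCLM_comp (Lf : Vnm n m →ₗ[DualNumber ℝ] Vnm s t)
    (Lg : Vnm s t →ₗ[DualNumber ℝ] Vnm p q) :
    euclideanCLM (Lg.comp Lf) = (euclideanCLM Lg).comp (euclideanCLM Lf) := by
  ext1 w
  simp [euclideanCLM_apply]

theorem mapsTo_euclideanMap {f : Vnm n m → Vnm s t} {U : Set (Vnm n m)} {W : Set (Vnm s t)}
    (h : Set.MapsTo f U W) :
    Set.MapsTo (euclideanMap f) (toEuclidean n m '' U) (toEuclidean s t '' W) := by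
  rintro _ ⟨x, hx, rfl⟩
  exact ⟨f x, h hx, (euclideanMap_toEuclidean f x).symm⟩

theorem drDiffAt_iff_hasFDerivWithinAt (U : Set (Vnm n m)) (f : Vnm n m → Vnm s t)
    (a : Vnm n m) (L : Vnm n m →ₗ[DualNumber ℝ] Vnm s t) :
    DRDiffAt U f a L ↔ HasFDerivWithinAt (euclideanMap f) (euclideanCLM L)
      (toEuclidean n m '' U) (toEuclidean n m a) := by
  have hmap := (toEuclidean n m).toHomeomorph.isEmbedding.map_nhdsWithin_eq (U \ {a}) a
  rw [ContinuousLinearEquiv.coe_toHomeomorph, Set.image_sdiff (toEuclidean n m).injective,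
    Set.image_singleton] at hmap
  rw [← hasFDerivWithinAt_sdiff_singleton (toEuclidean n m a), hasFDerivWithinAt_iff_tendsto,
    ← hmap, Filter.tendsto_map'_iff, DRDiffAt]
  refine Filter.tendsto_congr fun x => ?_
  simp only [Function.comp_apply, euclideanMap_toEuclidean, euclideanCLM_apply, ← map_sub,
    ContinuousLinearEquiv.symm_apply_apply, norm_toEuclidean, div_eq_inv_mul]

end Vnm

theorem drDiffAt_comp_general {n m s t p q : ℕ} (U : Set (Vnm n m))
    (W : Set (Vnm s t))
    (a : Vnm n m)
    (f : Vnm n m → Vnm s t) (g : Vnm s t → Vnm p q)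
    (hfUW : Set.MapsTo f U W)
    (Lf : Vnm n m →ₗ[DualNumber ℝ] Vnm s t) (Lg : Vnm s t →ₗ[DualNumber ℝ] Vnm p q)
    (hf : DRDiffAt U f a Lf) (hg : DRDiffAt W g (f a) Lg) :
    DRDiffAt U (g ∘ f) a (Lg.comp Lf) := by
  rw [Vnm.drDiffAt_iff_hasFDerivWithinAt, Vnm.euclideanMap_comp, Vnm.euclideanCLM_comp]
  rw [Vnm.drDiffAt_iff_hasFDerivWithinAt] at hf
  rw [Vnm.drDiffAt_iff_hasFDerivWithinAt, ← Vnm.euclideanMap_toEuclidean] at hg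
  exact hg.comp _ hf (Vnm.mapsTo_euclideanMap hfUW)

/-- chain rule: `D(g ∘ f)(a) = Dg(f a) ∘ Df(a)`. -/
theorem drDiffAt_comp {n m s t p q : ℕ} (U : Set (Vnm n m)) (hU : IsOpen U)
    (W : Set (Vnm s t)) (hW : IsOpen W)
    (a : Vnm n m) (ha : a ∈ U)
    (f : Vnm n m → Vnm s t) (g : Vnm s t → Vnm p q)
    (hfUW : Set.MapsTo f U W) (hfa : f a ∈ W)
    (Lf : Vnm n m →ₗ[DualNumber ℝ] Vnm s t) (Lg : Vnm s t →ₗ[DualNumber ℝ] Vnm p q)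
    (hf : DRDiffAt U f a Lf) (hg : DRDiffAt W g (f a) Lg) :
    DRDiffAt U (g ∘ f) a (Lg.comp Lf) :=
  drDiffAt_comp_general U W a f g hfUW Lf Lg hf hg
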